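/- arXiv:2205.08359 — 6 statements merged into one kernel-verified Lean document; each statement's English description precedes it below -/
import Mathlib

section
/- Let R be a local nearring with identity i and let L be the set of non-invertible elements (which by assumption is a subgroup of (R,+)). Then every proper R*-invariant subgroup of (R,+) is contained in L, where a subgroup M is R*-invariant if rM ⊆ M for every invertible element r. -/
/-- In a local nearring `R` with identity `i` and subgroup `L` of non-invertible
elements, every proper `R*`-invariant subgroup of `(R,+)` is contained in `L`. -/
theorem local_nearring_proper_invariant_subgroup_le
    {R : Type*} [AddGroup R] (mul : R → R → R)
    (hassoc : ∀ x y z : R, mul (mul x y) z = mul x (mul y z))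
    (hdist : ∀ x y z : R, mul x (y + z) = mul x y + mul x z)
    (i : R) (hid : ∀ x : R, mul i x = x ∧ mul x i = x)
    (L : Set R) (hL : L = {x : R | ¬ ∃ v : R, mul x v = i ∧ mul v x = i})
    (LS : AddSubgroup R) (hLS : (LS : Set R) = L) :
    ∀ M : AddSubgroup R, M ≠ ⊤ →
      (∀ r m : R, (∃ v : R, mul r v = i ∧ mul v r = i) → m ∈ M → mul r m ∈ M) →
      (M : Set R) ⊆ L := by
  intro M hM hinv m hm
  by_contra hmL
  -- m is invertible
  rw [hL] at hmL
  simp only [Set.mem_setOf_eq, not_not] at hmL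
  obtain ⟨v, hmv, hvm⟩ := hmL
  -- i ∈ M
  have hiM : i ∈ M := hvm ▸ hinv v m ⟨m, hvm, hmv⟩ hm
  -- i ∉ L
  have hiL : i ∉ L := by
    rw [hL]; simp only [Set.mem_setOf_eq, not_not]
    exact ⟨i, (hid i).1, (hid i).1⟩
  -- M = ⊤
  apply hM
  rw [AddSubgroup.eq_top_iff']
  intro x
  by_cases hx : x ∈ L
  · -- x + i ∉ L, so x + i ∈ M (being invertible times i), then x ∈ M
    have hxi : x + i ∉ L := by
      intro h
      apply hiL
      have : -x + (x + i) ∈ LS := by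
        refine AddSubgroup.add_mem _ ?_ ?_
        · rw [← AddSubgroup.neg_mem_iff, neg_neg, ← SetLike.mem_coe, hLS]
          exact hx
        · rw [← SetLike.mem_coe, hLS]; exact h
      rw [← SetLike.mem_coe, hLS] at this
      simpa using this
    rw [hL] at hxi
    simp only [Set.mem_setOf_eq, not_not] at hxi
    have hxiM : x + i ∈ M := by
      have := hinv (x + i) i hxi hiM
      rwa [(hid (x + i)).2] at this
    have := M.sub_mem hxiM hiM
    simpa using this
  · -- x is invertible
    rw [hL] at hx
    simp only [Set.mem_setOf_eq, not_not] at hx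
    have := hinv x i hx hiM
    rwa [(hid x).2] at this
end

section
/- Let R be a finite local nearring with identity i and subgroup of non-invertible elements L. Then the set i + L = {i + x : x ∈ L} is a subgroup of the multiplicative group R* of invertible elements of R. -/
/-- In a finite local nearring `R` with identity `i` and subgroup `L` of
non-invertible elements, the set `i + L` forms a subgroup of the multiplicative
group `R*`: it contains `i`, is closed under multiplication, and every element
of it is invertible with inverse again in `i + L`. -/
theorem local_nearring_one_add_L_subgroup
    {R : Type*} [AddGroup R] [Fintype R] (mul : R → R → R)
    (hassoc : ∀ x y z : R, mul (mul x y) z = mul x (mul y z))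
    (hdist : ∀ x y z : R, mul x (y + z) = mul x y + mul x z)
    (i : R) (hid : ∀ x : R, mul i x = x ∧ mul x i = x)
    (L : Set R) (hL : L = {x : R | ¬ ∃ v : R, mul x v = i ∧ mul v x = i})
    (LS : AddSubgroup R) (hLS : (LS : Set R) = L) :
    i ∈ (fun x => i + x) '' L ∧
      (∀ u ∈ (fun x => i + x) '' L, ∀ w ∈ (fun x => i + x) '' L,
        mul u w ∈ (fun x => i + x) '' L) ∧
      ∀ u ∈ (fun x => i + x) '' L,
        ∃ v ∈ (fun x => i + x) '' L, mul u v = i ∧ mul v u = i := by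
  -- membership transfer
  have hmemL : ∀ x : R, x ∈ L ↔ x ∈ LS := by
    intro x; rw [← SetLike.mem_coe, hLS]
  -- left inverse implies two-sided inverse (finiteness)
  have hA : ∀ y v' : R, mul v' y = i → ∃ v : R, mul y v = i ∧ mul v y = i := by
    intro y v' hv'
    have hinj : Function.Injective (fun z => mul y z) := by
      intro a b hab
      have : mul v' (mul y a) = mul v' (mul y b) := by simp only at hab; rw [hab]
      rwa [← hassoc, ← hassoc, hv', (hid a).1, (hid b).1] at this
    have hsurj := Finite.injective_iff_surjective.mp hinj
    obtain ⟨w, hw⟩ := hsurj i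
    simp only at hw
    have hvw : v' = w := by
      have h1 : mul v' (mul y w) = v' := by rw [hw, (hid v').2]
      rw [← hassoc, hv', (hid w).1] at h1
      exact h1.symm
    exact ⟨w, hw, hvw ▸ hv'⟩
  -- product with a non-unit (on the right) is a non-unit
  have hB : ∀ a y : R, y ∈ L → mul a y ∈ L := by
    intro a y hy
    rw [hL]
    intro ⟨v, h1, h2⟩
    have : mul (mul v a) y = i := by rw [hassoc]; exact h2
    obtain ⟨w, hw1, hw2⟩ := hA y (mul v a) this
    rw [hL] at hy
    exact hy ⟨w, hw1, hw2⟩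
  -- mul x 0 = 0 and mul x (-y) = -(mul x y)
  have h0 : ∀ x : R, mul x 0 = 0 := by
    intro x
    have := hdist x 0 0
    rw [add_zero] at this
    nth_rewrite 1 [← add_zero (mul x 0)] at this
    exact (add_left_cancel this).symm
  have hneg : ∀ x y : R, mul x (-y) = -(mul x y) := by
    intro x y
    have := hdist x y (-y)
    rw [add_neg_cancel, h0] at this
    exact eq_neg_of_add_eq_zero_right this.symm
  have h0L : (0 : R) ∈ L := (hmemL 0).mpr LS.zero_mem
  refine ⟨⟨0, h0L, by simp⟩, ?_, ?_⟩
  · rintro u ⟨x, hx, rfl⟩ w ⟨y, hy, rfl⟩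
    simp only
    refine ⟨x + mul (i + x) y, ?_, ?_⟩
    · exact (hmemL _).mpr (LS.add_mem ((hmemL x).mp hx) ((hmemL _).mp (hB _ y hy)))
    · simp only
      rw [hdist, (hid (i + x)).2, ← add_assoc]
  · rintro u ⟨x, hx, rfl⟩
    simp only at *
    -- i + x is invertible
    have hu : ∃ v : R, mul (i + x) v = i ∧ mul v (i + x) = i := by
      by_contra hnu
      have huL : i + x ∈ L := by rw [hL]; exact hnu
      have : (i : R) ∈ LS := by
        have := LS.add_mem ((hmemL _).mp huL) (LS.neg_mem ((hmemL x).mp hx))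
        rwa [add_neg_cancel_right] at this
      have hiL := (hmemL i).mpr this
      rw [hL] at hiL
      exact hiL ⟨i, (hid i).1, (hid i).1⟩
    obtain ⟨v, hv1, hv2⟩ := hu
    -- -i + v ∈ L since -i + v = mul v (-x) and -x ∈ L
    have key : mul v (-x) = -i + v := by
      have h1 : mul (i + x) (-i + v) = -x := by
        rw [hdist, hneg, (hid (i + x)).2, hv1, neg_add_rev, add_assoc,
          neg_add_cancel, add_zero]
      calc mul v (-x) = mul v (mul (i + x) (-i + v)) := by rw [h1]
        _ = mul (mul v (i + x)) (-i + v) := (hassoc _ _ _).symm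
        _ = -i + v := by rw [hv2, (hid _).1]
    have hnivL : -i + v ∈ L := by
      rw [← key]
      exact hB v (-x) ((hmemL _).mpr (LS.neg_mem ((hmemL x).mp hx)))
    exact ⟨v, ⟨-i + v, hnivL, by simp⟩, hv1, hv2⟩
end

section
/- Define on Z_{p²} × Z_p (p prime) the componentwise addition and the multiplication (x1,x2)·(y1,y2) = (x1·y1 + p·x2·y2, x2·y1 + x1·y2 mod p). Then this multiplication is associative, left-distributive over addition, has identity (1,0), and an element (x1,x2) is invertible if and only if x1 is not divisible by p; the non-invertible elements form an additive subgroup, so this is a local nearring (in fact a commutative ring). -/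
/-- The multiplication `(x₁,x₂)·(y₁,y₂) = (x₁y₁ + p·x₂·y₂, x₂·y₁ + x₁·y₂ mod p)`
on `ZMod (p²) × ZMod p`. -/
def mcMul (p : ℕ) (x y : ZMod (p ^ 2) × ZMod p) : ZMod (p ^ 2) × ZMod p :=
  (x.1 * y.1 + ((p * x.2.val * y.2.val : ℕ) : ZMod (p ^ 2)),
    x.2 * ((y.1.val : ℕ) : ZMod p) + ((x.1.val : ℕ) : ZMod p) * y.2)

/-- With componentwise addition on `ZMod (p²) × ZMod p`, the multiplication
`mcMul` is associative, commutative, left-distributive, has identity `(1,0)`,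
an element `(x₁,x₂)` is invertible iff `p ∤ x₁`, and the non-invertible
elements form an additive subgroup; so this is a local nearring (in fact a
commutative ring). -/
theorem mcMul_local_nearring (p : ℕ) (hp : p.Prime) :
    (∀ x y z : ZMod (p ^ 2) × ZMod p, mcMul p (mcMul p x y) z = mcMul p x (mcMul p y z)) ∧
      (∀ x y : ZMod (p ^ 2) × ZMod p, mcMul p x y = mcMul p y x) ∧
      (∀ x y z : ZMod (p ^ 2) × ZMod p, mcMul p x (y + z) = mcMul p x y + mcMul p x z) ∧
      (∀ x : ZMod (p ^ 2) × ZMod p, mcMul p (1, 0) x = x ∧ mcMul p x (1, 0) = x) ∧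
      (∀ x : ZMod (p ^ 2) × ZMod p,
        (∃ v, mcMul p x v = (1, 0) ∧ mcMul p v x = (1, 0)) ↔ ¬ p ∣ x.1.val) ∧
      ∃ S : AddSubgroup (ZMod (p ^ 2) × ZMod p),
        (S : Set (ZMod (p ^ 2) × ZMod p)) = {x | p ∣ x.1.val} := by
  haveI : NeZero p := ⟨hp.ne_zero⟩
  haveI : NeZero (p ^ 2) := ⟨pow_ne_zero 2 hp.ne_zero⟩
  haveI : Fact (1 < p) := ⟨hp.one_lt⟩
  haveI : Fact (1 < p ^ 2) := ⟨one_lt_pow₀ hp.one_lt two_ne_zero⟩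
  have hdvd : p ∣ p ^ 2 := dvd_pow_self p two_ne_zero
  set φ := ZMod.castHom hdvd (ZMod p) with hφdef
  have hφ : ∀ w : ZMod (p ^ 2), ((w.val : ℕ) : ZMod p) = φ w := fun w => by
    rw [hφdef, ZMod.castHom_apply, ZMod.natCast_val]
  have psq : (p : ZMod (p ^ 2)) * p = 0 := by
    have h : ((p ^ 2 : ℕ) : ZMod (p ^ 2)) = 0 := ZMod.natCast_self _
    push_cast at h
    linear_combination h
  have keyc : ∀ n : ℕ, (p : ZMod (p ^ 2)) * ((n % p : ℕ) : ZMod (p ^ 2)) = p * (n : ZMod (p ^ 2)) := by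
    intro n
    conv_rhs => rw [← Nat.mod_add_div n p]
    push_cast
    linear_combination (-((n / p : ℕ) : ZMod (p ^ 2))) * psq
  have hmul : ∀ a b : ZMod p, (p : ZMod (p ^ 2)) * (((a * b).val : ℕ) : ZMod (p ^ 2))
      = p * ((a.val : ℕ) : ZMod (p ^ 2)) * ((b.val : ℕ) : ZMod (p ^ 2)) := by
    intro a b
    rw [ZMod.val_mul, keyc]
    push_cast
    ring
  have hadd : ∀ a b : ZMod p, (p : ZMod (p ^ 2)) * (((a + b).val : ℕ) : ZMod (p ^ 2))
      = p * ((a.val : ℕ) : ZMod (p ^ 2)) + p * ((b.val : ℕ) : ZMod (p ^ 2)) := by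
    intro a b
    rw [ZMod.val_add, keyc]
    push_cast
    ring
  have hneg : ∀ a : ZMod p, (p : ZMod (p ^ 2)) * (((-a).val : ℕ) : ZMod (p ^ 2))
      = -(p * ((a.val : ℕ) : ZMod (p ^ 2))) := by
    intro a
    have h := hadd a (-a)
    simp only [add_neg_cancel, ZMod.val_zero, Nat.cast_zero, mul_zero] at h
    linear_combination -h
  have hphi : ∀ w : ZMod (p ^ 2), (p : ZMod (p ^ 2)) * (((φ w).val : ℕ) : ZMod (p ^ 2)) = p * w := by
    intro w
    rw [← hφ, ZMod.val_natCast, keyc, ZMod.natCast_val, ZMod.cast_id]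
  have hφp : φ ((p : ℕ) : ZMod (p ^ 2)) = 0 := by
    rw [map_natCast, ZMod.natCast_self]
  -- commutativity
  have hcomm : ∀ x y : ZMod (p ^ 2) × ZMod p, mcMul p x y = mcMul p y x := by
    intro x y
    simp only [mcMul, Prod.mk.injEq]
    push_cast
    constructor <;> ring
  refine ⟨?_, hcomm, ?_, ?_, ?_, ?_⟩
  · -- associativity
    intro x y z
    simp only [mcMul, hφ, Prod.mk.injEq]
    push_cast
    constructor
    · linear_combination ((z.2.val : ZMod (p ^ 2))) * hadd (x.2 * φ y.1) (φ x.1 * y.2)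
        + ((z.2.val : ZMod (p ^ 2))) * hmul x.2 (φ y.1)
        + ((z.2.val : ZMod (p ^ 2))) * hmul (φ x.1) y.2
        - ((x.2.val : ZMod (p ^ 2))) * hadd (y.2 * φ z.1) (φ y.1 * z.2)
        - ((x.2.val : ZMod (p ^ 2))) * hmul y.2 (φ z.1)
        - ((x.2.val : ZMod (p ^ 2))) * hmul (φ y.1) z.2
        + ((y.2.val : ZMod (p ^ 2)) * (z.2.val : ZMod (p ^ 2))) * hphi x.1
        - ((x.2.val : ZMod (p ^ 2)) * (y.2.val : ZMod (p ^ 2))) * hphi z.1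
    · simp only [map_add, map_mul, map_natCast φ, Nat.cast_mul, ZMod.natCast_self, zero_mul,
        mul_zero, add_zero, zero_add]
      ring
  · -- distributivity
    intro x y z
    simp only [mcMul, hφ, Prod.fst_add, Prod.snd_add, Prod.mk.injEq, Prod.mk_add_mk]
    push_cast
    constructor
    · linear_combination ((x.2.val : ZMod (p ^ 2))) * hadd y.2 z.2
    · simp only [map_add]
      ring
  · -- identity
    intro x
    obtain ⟨x1, x2⟩ := x
    constructor <;>
      simp [mcMul, hφ, ZMod.val_zero, ZMod.val_one, Prod.ext_iff]
  · -- units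
    intro x
    constructor
    · rintro ⟨v, hxv, -⟩
      intro hdd
      have h1 : φ ((mcMul p x v).1) = φ 1 := by rw [hxv]
      simp only [mcMul, map_add, map_mul, map_one, map_natCast φ, Nat.cast_mul,
        ZMod.natCast_self, zero_mul, add_zero] at h1
      have h0 : φ x.1 = 0 := by
        rw [← hφ]
        exact (ZMod.natCast_eq_zero_iff _ _).mpr hdd
      rw [h0, zero_mul] at h1
      exact zero_ne_one h1
    · intro hnd
      have hco : Nat.Coprime x.1.val (p ^ 2) :=
        Nat.Coprime.pow_right 2 (((Nat.Prime.coprime_iff_not_dvd hp).mpr hnd).symm)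
      have hux : IsUnit x.1 := by
        have := (ZMod.isUnit_iff_coprime x.1.val (p ^ 2)).mpr hco
        rwa [ZMod.natCast_val, ZMod.cast_id] at this
      obtain ⟨u, hu1⟩ := hux.exists_right_inv
      have hu2 : φ x.1 * φ u = 1 := by rw [← map_mul, hu1, map_one]
      set a := φ u with ha
      have hv : mcMul p x (u + (p : ZMod (p ^ 2)) * (((a * a * a * x.2 * x.2).val : ℕ) : ZMod (p ^ 2)),
          -(a * a * x.2)) = (1, 0) := by
        have key2 : (p : ZMod (p ^ 2)) * (((φ x.1 * a).val : ℕ) : ZMod (p ^ 2))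
            = p * (((1 : ZMod p).val : ℕ) : ZMod (p ^ 2)) := by rw [hu2]
        rw [ZMod.val_one] at key2
        simp only [mcMul, hφ, Prod.mk.injEq]
        push_cast at key2 ⊢
        constructor
        · linear_combination hu1
            - (((a * a * a * x.2 * x.2).val : ZMod (p ^ 2))) * hphi x.1
            + (((φ x.1).val : ZMod (p ^ 2))) * hmul (a * a * a * x.2) x.2
            + (((φ x.1).val : ZMod (p ^ 2)) * ((x.2.val : ZMod (p ^ 2)))) * hmul (a * a * a) x.2
            + (((φ x.1).val : ZMod (p ^ 2)) * ((x.2.val : ZMod (p ^ 2))) * ((x.2.val : ZMod (p ^ 2)))) * hmul (a * a) a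
            - (((a * a).val : ZMod (p ^ 2)) * ((x.2.val : ZMod (p ^ 2))) * ((x.2.val : ZMod (p ^ 2)))) * hmul (φ x.1) a
            + (((a * a).val : ZMod (p ^ 2)) * ((x.2.val : ZMod (p ^ 2))) * ((x.2.val : ZMod (p ^ 2)))) * key2
            + ((x.2.val : ZMod (p ^ 2))) * hneg (a * a * x.2)
            - ((x.2.val : ZMod (p ^ 2))) * hmul (a * a) x.2
        · simp only [map_add, map_mul, map_natCast φ, ZMod.natCast_self, zero_mul, add_zero]
          linear_combination (-(a * x.2)) * hu2
      exact ⟨_, hv, by rw [hcomm]; exact hv⟩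
  · exact ⟨((ZMod.castHom hdvd (ZMod p)).toAddMonoidHom.comp
      (AddMonoidHom.fst (ZMod (p ^ 2)) (ZMod p))).ker, by
      ext w
      simp [AddMonoidHom.mem_ker, ZMod.castHom_apply, ← ZMod.natCast_val,
        ZMod.natCast_eq_zero_iff]⟩
end

section
/- Define on Z_{p²} × Z_p (p prime) the componentwise addition and the multiplication (x1,x2)·(y1,y2) = (x1·y1, x2·y1 + y2). Then this multiplication is associative, left-distributive over addition, has identity (1,0), the non-invertible elements are exactly the pairs (x1,x2) with p ∣ x1 and they form an additive subgroup, and 0·(0,1) = (0,1) ≠ 0, so the resulting local nearring is not zero-symmetric. -/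
/-- The multiplication `(x₁,x₂)·(y₁,y₂) = (x₁y₁, x₂·y₁ + y₂)` on
`ZMod (p²) × ZMod p`. -/
def mcMul14 (p : ℕ) (x y : ZMod (p ^ 2) × ZMod p) : ZMod (p ^ 2) × ZMod p :=
  (x.1 * y.1, x.2 * ((y.1.val : ℕ) : ZMod p) + y.2)

/-- With componentwise addition on `ZMod (p²) × ZMod p`, the multiplication
`mcMul14` is associative, left-distributive, has identity `(1,0)`, the
non-invertible elements are exactly the pairs with `p ∣ x₁` and form an
additive subgroup, and `0·(0,1) = (0,1) ≠ 0`, so the resulting local nearring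
is not zero-symmetric. -/
theorem mcMul14_local_nearring_not_zero_symmetric (p : ℕ) (hp : p.Prime) :
    (∀ x y z : ZMod (p ^ 2) × ZMod p,
        mcMul14 p (mcMul14 p x y) z = mcMul14 p x (mcMul14 p y z)) ∧
      (∀ x y z : ZMod (p ^ 2) × ZMod p,
        mcMul14 p x (y + z) = mcMul14 p x y + mcMul14 p x z) ∧
      (∀ x : ZMod (p ^ 2) × ZMod p, mcMul14 p (1, 0) x = x ∧ mcMul14 p x (1, 0) = x) ∧
      (∀ x : ZMod (p ^ 2) × ZMod p,
        (¬ ∃ v, mcMul14 p x v = (1, 0) ∧ mcMul14 p v x = (1, 0)) ↔ p ∣ x.1.val) ∧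
      (∃ S : AddSubgroup (ZMod (p ^ 2) × ZMod p),
        (S : Set (ZMod (p ^ 2) × ZMod p)) = {x | p ∣ x.1.val}) ∧
      mcMul14 p (0 : ZMod (p ^ 2) × ZMod p) (0, 1) = (0, 1) ∧
      ((0, 1) : ZMod (p ^ 2) × ZMod p) ≠ 0 := by
  haveI : Fact p.Prime := ⟨hp⟩
  haveI : NeZero (p ^ 2) := ⟨pow_ne_zero 2 hp.ne_zero⟩
  have hdvd : p ∣ p ^ 2 := dvd_pow_self p two_ne_zero
  set f := ZMod.castHom hdvd (ZMod p) with hfdef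
  have hf : ∀ a : ZMod (p ^ 2), ((a.val : ℕ) : ZMod p) = f a := fun a => by
    rw [ZMod.natCast_val, ZMod.castHom_apply]
  have key : ∀ a : ZMod (p ^ 2), p ∣ a.val ↔ f a = 0 := fun a => by
    rw [← hf, ZMod.natCast_eq_zero_iff]
  refine ⟨?_, ?_, ?_, ?_, ?_, ?_, ?_⟩
  · intro x y z
    simp only [mcMul14, hf, map_mul, Prod.mk.injEq]
    exact ⟨mul_assoc _ _ _, by ring⟩
  · intro x y z
    simp only [mcMul14, hf, Prod.fst_add, Prod.snd_add, map_add, Prod.mk_add_mk,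
      Prod.mk.injEq]
    exact ⟨mul_add _ _ _, by ring⟩
  · intro x
    constructor
    · simp [mcMul14, hf]
    · simp [mcMul14, hf, map_one]
  · intro x
    constructor
    · intro hne
      by_contra h
      apply hne
      have hco : Nat.Coprime x.1.val (p ^ 2) :=
        Nat.Coprime.pow_right 2 ((hp.coprime_iff_not_dvd.mpr h).symm)
      have hu : IsUnit x.1 := by
        have := (ZMod.isUnit_iff_coprime x.1.val (p ^ 2)).mpr hco
        rwa [ZMod.natCast_val, ZMod.cast_id] at this
      obtain ⟨u, hu⟩ := hu
      refine ⟨((u⁻¹ : (ZMod (p ^ 2))ˣ), -(x.2 * f (u⁻¹ : (ZMod (p ^ 2))ˣ))), ?_, ?_⟩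
      · have h1 : x.1 * (u⁻¹ : (ZMod (p ^ 2))ˣ) = 1 := by rw [← hu]; exact u.mul_inv
        simp [mcMul14, hf, h1]
      · have h2 : ((u⁻¹ : (ZMod (p ^ 2))ˣ) : ZMod (p ^ 2)) * x.1 = 1 := by
          rw [← hu]; exact u.inv_mul
        have h3 : f (u⁻¹ : (ZMod (p ^ 2))ˣ) * f x.1 = 1 := by
          rw [← map_mul, h2, map_one]
        refine Prod.ext h2 ?_
        simp only [mcMul14, hf]
        rw [neg_mul, mul_assoc, h3, mul_one, neg_add_cancel]
    · rintro hd ⟨v, h1, h2⟩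
      have hc : x.1 * v.1 = 1 := congrArg Prod.fst h1
      have : f x.1 * f v.1 = 1 := by rw [← map_mul, hc, map_one]
      rw [(key x.1).mp hd, zero_mul] at this
      exact zero_ne_one this
  · refine ⟨(f.toAddMonoidHom.comp (AddMonoidHom.fst _ _)).ker, ?_⟩
    ext x
    simp [AddMonoidHom.mem_ker, key]
  · simp [mcMul14]
  · intro h
    exact one_ne_zero (congrArg Prod.snd h)
end

section
/- Let R be a finite zero-symmetric local nearring of order p³ whose subgroup L of non-invertible elements is cyclic and nontrivial. If R is not isomorphic to Z/p³Z and R is not a nearfield, then L is not cyclic of order p², i.e., the subgroup of non-invertible elements of any local nearring of order p³ that is neither Z/p³Z nor a nearfield is elementary abelian of order p². -/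
/-!
Left multiplication by a non-unit `x` is an additive endomorphism with image in `L`. If
`|L|² < |R|`, its kernel therefore contains a unit `u`, so `x = 0 * u⁻¹` and `y * x = x` for all
`y`. Moreover `ker (0 * ·) ⊓ ker (a * ·)` has index at most `|L|²`, so it contains some `r ≠ 0`,
and this forces `a = 0`: either `r ∈ L` and `r = 0 * r = 0`, or `r` is a unit and
`a = 0 * r⁻¹ = 0`. Hence `|L| = p²`, as `L` is neither trivial nor all of `R`.

Since `R ≇ ℤ/p³ℤ`, the identity has additive order dividing `p²` (otherwise `k ↦ k • 1` would be
an isomorphism), and `c = p • 1` satisfies `x * c = p • x`. If some `l ∈ L` had order `p²`, then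
`L = ⟨l⟩` is the image of `l * ·`, whose kernel has order `p` and consists of non-units killed by
`p` (a unit `n` with `p • n = 0` would give `c = 0`), so it is `⟨p • l⟩`. The non-unit `c` also
lies in `⟨p • l⟩`, whence `p • l = l * c = 0`. Finally, groups of order `p²` are abelian.
-/

open AddSubgroup

lemma mem_zmultiples_nsmul_of_nsmul_eq_zero {G : Type*} [AddGroup G] {g x : G} {m n : ℕ}
    (hg : addOrderOf g = m * n) (hm : m ≠ 0) (hx : x ∈ zmultiples g) (hmx : m • x = 0) :
    x ∈ zmultiples (n • g) := by
  obtain ⟨k, rfl⟩ := mem_zmultiples_iff.mp hx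
  have hdvd : ((m * n : ℕ) : ℤ) ∣ m * k := by
    rw [← hg, addOrderOf_dvd_iff_zsmul_eq_zero, mul_zsmul, natCast_zsmul, hmx]
  obtain ⟨j, rfl⟩ : (n : ℤ) ∣ k := by
    push_cast at hdvd
    exact (mul_dvd_mul_iff_left (by exact_mod_cast hm)).mp hdvd
  exact ⟨j, by simp only [← natCast_zsmul, ← mul_zsmul']⟩

lemma add_comm_of_card_eq_prime_sq {G : Type*} [AddGroup G] {p : ℕ} [Fact p.Prime]
    (hG : Nat.card G = p ^ 2) (a b : G) : a + b = b + a :=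
  (IsPGroup.isMulCommutative_of_card_eq_prime_sq (G := Multiplicative G) hG).is_comm.comm
    (.ofAdd a) (.ofAdd b)

namespace LeftNearRing

variable {R : Type*} [AddGroup R] [Monoid R] [LeftDistribClass R]

def mulLeft (x : R) : R →+ R := AddMonoidHom.mk' (x * ·) (mul_add x)

protected lemma mul_zero (x : R) : x * 0 = 0 := (mulLeft x).map_zero

lemma mul_nsmul_comm (x y : R) (n : ℕ) : x * (n • y) = n • (x * y) :=
  (mulLeft x).map_nsmul n y

lemma mul_zsmul_comm (x y : R) (n : ℤ) : x * (n • y) = n • (x * y) :=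
  (mulLeft x).map_zsmul n y

lemma mul_nsmul_one (x : R) (n : ℕ) : x * (n • 1) = n • x := by
  rw [mul_nsmul_comm, mul_one]

lemma mul_zsmul_one (x : R) (n : ℤ) : x * (n • 1) = n • x := by
  rw [mul_zsmul_comm, mul_one]

lemma mul_eq_self_of_mul_eq_zero {x u : R} (hu : IsUnit u) (hxu : x * u = 0) (y : R) :
    y * x = x := by
  obtain ⟨u, rfl⟩ := hu
  have hx : x = 0 * ↑u⁻¹ := by rw [← hxu, mul_assoc, Units.mul_inv, mul_one]
  rw [hx, ← mul_assoc, LeftNearRing.mul_zero]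

lemma not_isUnit_nsmul_one {t : R} (ht : t ≠ 0) {n : ℕ} (hnt : n • t = 0) :
    ¬ IsUnit (n • (1 : R)) := fun hunit =>
  ht <| hunit.mul_left_injective <| by
    simp only [mul_nsmul_one, hnt, nsmul_zero]

lemma nsmul_one_eq_zero_of_isUnit {u : R} (hu : IsUnit u) {n : ℕ} (hnu : n • u = 0) :
    n • (1 : R) = 0 := by
  obtain ⟨u, rfl⟩ := hu
  rw [← Units.inv_mul u, ← mul_nsmul_comm, hnu, LeftNearRing.mul_zero]

lemma exists_equiv_zmod_of_addOrderOf_one [Finite R] (h : addOrderOf (1 : R) = Nat.card R) :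
    ∃ e : R ≃ ZMod (Nat.card R),
      (∀ x y : R, e (x + y) = e x + e y) ∧ ∀ x y : R, e (x * y) = e x * e y := by
  have hgen : ∀ x : R, x ∈ zmultiples (1 : R) := by
    rw [(zmultiples (1 : R)).eq_top_of_card_eq (by rw [Nat.card_zmultiples, h])]
    exact mem_top
  set f := zmodAddEquivOfGenerator hgen rfl
  have hf_mul : ∀ a b, f (a * b) = f a * f b := by
    intro a b
    obtain ⟨m, rfl⟩ := ZMod.intCast_surjective a
    obtain ⟨n, rfl⟩ := ZMod.intCast_surjective b
    simp only [f, ← Int.cast_mul, zmodAddEquivOfGenerator_apply_intCast, mul_zsmul_one,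
      mul_comm m n, mul_zsmul]
  refine ⟨f.symm.toEquiv, f.symm.map_add, fun x y => f.injective ?_⟩
  simp [hf_mul]

lemma prime_sq_nsmul_one_eq_zero [Finite R] {p : ℕ} (hp : p.Prime) (hcard : Nat.card R = p ^ 3)
    (hnot : ¬ ∃ e : R ≃ ZMod (p ^ 3),
      (∀ x y : R, e (x + y) = e x + e y) ∧ ∀ x y : R, e (x * y) = e x * e y) :
    p ^ 2 • (1 : R) = 0 := by
  obtain ⟨k, hk3, hk⟩ := (Nat.dvd_prime_pow hp).mp (hcard ▸ addOrderOf_dvd_natCard (1 : R))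
  rw [← addOrderOf_dvd_iff_nsmul_eq_zero, hk]
  refine pow_dvd_pow p (by_contra fun hk2 => hnot ?_)
  rw [← hcard]
  exact exists_equiv_zmod_of_addOrderOf_one (by rw [hk, hcard, show k = 3 by omega])

section NonUnits

variable {L : AddSubgroup R}

lemma range_mulLeft_le [IsDedekindFiniteMonoid R] (hL : ∀ x, x ∈ L ↔ ¬ IsUnit x) {x : R}
    (hx : x ∈ L) : (mulLeft x).range ≤ L := by
  rintro _ ⟨y, rfl⟩
  exact (hL _).2 fun h => (hL x).1 hx (isUnit_of_mul_isUnit_left h)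

lemma index_ker_mulLeft_le [Finite R] (hL : ∀ x, x ∈ L ↔ ¬ IsUnit x) {x : R} (hx : x ∈ L) :
    (mulLeft x).ker.index ≤ Nat.card L := by
  rw [index_ker]
  exact card_le_of_le (range_mulLeft_le hL hx)

lemma exists_isUnit_mul_eq_zero [Finite R] (hL : ∀ x, x ∈ L ↔ ¬ IsUnit x)
    (hcard : Nat.card L ^ 2 < Nat.card R) {x : R} (hx : x ∈ L) :
    ∃ u, IsUnit u ∧ x * u = 0 := by
  have hker : ¬ (mulLeft x).ker ≤ L := fun hle => by
    have : Nat.card R ≤ Nat.card L ^ 2 := calc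
      Nat.card R = Nat.card (mulLeft x).ker * (mulLeft x).ker.index := (card_mul_index _).symm
      _ ≤ Nat.card L * Nat.card L :=
        Nat.mul_le_mul (card_le_of_le hle) (index_ker_mulLeft_le hL hx)
      _ = Nat.card L ^ 2 := (sq _).symm
    omega
  obtain ⟨u, hu, huL⟩ := SetLike.not_le_iff_exists.mp hker
  exact ⟨u, not_not.mp fun h => huL ((hL u).2 h), hu⟩

lemma eq_bot_of_card_sq_lt [Finite R] (hL : ∀ x, x ∈ L ↔ ¬ IsUnit x)
    (hcard : Nat.card L ^ 2 < Nat.card R) : L = ⊥ := by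
  refine (eq_bot_iff_forall L).2 fun a ha => ?_
  have hK : (mulLeft (0 : R)).ker ⊓ (mulLeft a).ker ≠ ⊥ := fun hK => by
    have : Nat.card R ≤ Nat.card L ^ 2 := calc
      Nat.card R = ((mulLeft (0 : R)).ker ⊓ (mulLeft a).ker).index := by rw [hK, index_bot]
      _ ≤ (mulLeft (0 : R)).ker.index * (mulLeft a).ker.index := index_inf_le
      _ ≤ Nat.card L * Nat.card L :=
        Nat.mul_le_mul (index_ker_mulLeft_le hL L.zero_mem) (index_ker_mulLeft_le hL ha)
      _ = Nat.card L ^ 2 := (sq _).symm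
    omega
  obtain ⟨⟨r, hr0, hra⟩, hr_ne⟩ := ne_bot_iff_exists_ne_zero.mp hK
  have hr : r ≠ 0 := fun h => hr_ne (by simp [h])
  replace hr0 : 0 * r = 0 := hr0
  replace hra : a * r = 0 := hra
  by_cases hrL : r ∈ L
  · obtain ⟨u, hu, hru⟩ := exists_isUnit_mul_eq_zero hL hcard hrL
    exact absurd ((mul_eq_self_of_mul_eq_zero hu hru 0).symm.trans hr0) hr
  · obtain ⟨r, rfl⟩ := not_not.mp fun h => hrL ((hL r).2 h)
    calc a = a * r * ↑r⁻¹ := by rw [mul_assoc, Units.mul_inv, mul_one]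
      _ = 0 * r * ↑r⁻¹ := by rw [hra, hr0]
      _ = 0 := by rw [mul_assoc, Units.mul_inv, mul_one]

lemma card_eq_prime_sq [Finite R] (hL : ∀ x, x ∈ L ↔ ¬ IsUnit x) {p : ℕ} (hp : p.Prime)
    (hcard : Nat.card R = p ^ 3) {a : R} (ha : a ∈ L) (ha0 : a ≠ 0) : Nat.card L = p ^ 2 := by
  obtain ⟨k, hk3, hk⟩ := (Nat.dvd_prime_pow hp).mp (hcard ▸ L.card_addSubgroup_dvd_card)
  have hk2 : 2 ≤ k := by
    by_contra! hk1
    have hsq : Nat.card L ^ 2 < Nat.card R := by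
      rw [hk, hcard, ← pow_mul]
      exact Nat.pow_lt_pow_right hp.one_lt (by omega)
    exact ha0 ((eq_bot_iff_forall L).1 (eq_bot_of_card_sq_lt hL hsq) a ha)
  have hk_ne_three : k ≠ 3 := by
    rintro rfl
    have hone : (1 : R) ∈ L := by
      rw [L.eq_top_of_card_eq (hk.trans hcard.symm)]
      exact mem_top 1
    exact (hL 1).1 hone isUnit_one
  rw [hk, show k = 2 by omega]

lemma nsmul_eq_zero_of_mem [Finite R] (hL : ∀ x, x ∈ L ↔ ¬ IsUnit x) {p : ℕ} (hp : p.Prime)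
    (hcard : Nat.card R = p ^ 3) (hLcard : Nat.card L = p ^ 2) (hone : p ^ 2 • (1 : R) = 0)
    {l : R} (hl : l ∈ L) : p • l = 0 := by
  have := Fact.mk hp
  by_contra hpl
  have hpl2 : p ^ 2 • l = 0 := by
    rw [← addOrderOf_dvd_iff_nsmul_eq_zero, ← hLcard]
    exact L.addOrderOf_dvd_natCard hl
  have hord : addOrderOf l = p * p :=
    (addOrderOf_eq_prime_pow (n := 1) (by rwa [pow_one]) hpl2).trans (sq p)
  rw [sq, mul_nsmul'] at hpl2 hone
  have hc0 : p • (1 : R) ≠ 0 := fun h => hpl (by rw [← mul_nsmul_one, h, LeftNearRing.mul_zero])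
  have hcL : p • (1 : R) ∈ L := (hL _).2 (not_isUnit_nsmul_one hpl hpl2)
  have hLl : zmultiples l = L :=
    eq_of_le_of_card_ge (zmultiples_le.mpr hl) (by rw [Nat.card_zmultiples, hord, hLcard, sq])
  have hrange : (mulLeft l).range = L :=
    le_antisymm (range_mulLeft_le hL hl) (hLl ▸ zmultiples_le.mpr ⟨1, mul_one l⟩)
  have hker : Nat.card (mulLeft l).ker = p := by
    have h := (mulLeft l).ker.card_mul_index
    rw [index_ker, hrange, hLcard, hcard, show p ^ 3 = p * p ^ 2 by ring] at h
    exact Nat.eq_of_mul_eq_mul_right (pow_pos hp.pos 2) h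
  have hker_le : (mulLeft l).ker ≤ zmultiples (p • l) := fun n hn => by
    have hpn : p • n = 0 := by
      rw [← addOrderOf_dvd_iff_nsmul_eq_zero, ← hker]
      exact AddSubgroup.addOrderOf_dvd_natCard _ hn
    have hnL : n ∈ L := (hL n).2 fun hu => hc0 (nsmul_one_eq_zero_of_isUnit hu hpn)
    exact mem_zmultiples_nsmul_of_nsmul_eq_zero hord hp.ne_zero (hLl ▸ hnL) hpn
  have hker_eq : (mulLeft l).ker = zmultiples (p • l) := by
    refine eq_of_le_of_card_ge hker_le ?_
    rw [Nat.card_zmultiples, addOrderOf_nsmul_of_dvd hp.ne_zero (hord ▸ dvd_mul_right p p), hord,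
      Nat.mul_div_cancel _ hp.pos, hker]
  have hc_ker : p • (1 : R) ∈ (mulLeft l).ker :=
    hker_eq ▸ mem_zmultiples_nsmul_of_nsmul_eq_zero hord hp.ne_zero (hLl ▸ hcL) hone
  exact hpl ((mul_nsmul_one l p).symm.trans hc_ker)

end NonUnits

end LeftNearRing

open LeftNearRing in
/-- Let `R` be a local nearring of order `p³` which is not isomorphic to
`ℤ/p³ℤ` and is not a nearfield.  Then the subgroup `L` of non-invertible
elements is elementary abelian of order `p²`. -/
theorem local_nearring_p3_L_elementary_abelian (p : ℕ) (hp : p.Prime)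
    {R : Type*} [AddGroup R] [Fintype R] (hcard : Fintype.card R = p ^ 3)
    (mul : R → R → R)
    (hassoc : ∀ x y z : R, mul (mul x y) z = mul x (mul y z))
    (hdist : ∀ x y z : R, mul x (y + z) = mul x y + mul x z)
    (i : R) (hid : ∀ x : R, mul i x = x ∧ mul x i = x)
    (L : Set R) (hL : L = {x : R | ¬ ∃ v : R, mul x v = i ∧ mul v x = i})
    (LS : AddSubgroup R) (hLS : (LS : Set R) = L)
    (hnotring : ¬ ∃ e : R ≃ ZMod (p ^ 3),
      (∀ x y : R, e (x + y) = e x + e y) ∧ ∀ x y : R, e (mul x y) = e x * e y)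
    (hnotnearfield : ∃ x : R, x ≠ 0 ∧ x ∈ L) :
    Nat.card L = p ^ 2 ∧ (∀ z ∈ L, p • z = 0) ∧
      ∀ z ∈ L, ∀ w ∈ L, z + w = w + z := by
  let : Monoid R :=
    { mul, one := i, mul_assoc := hassoc,
      one_mul := fun x => (hid x).1, mul_one := fun x => (hid x).2 }
  have : LeftDistribClass R := ⟨hdist⟩
  have : Fact p.Prime := ⟨hp⟩
  subst hLS
  have hmem : ∀ x, x ∈ LS ↔ ¬ IsUnit x := fun x => by
    rw [← SetLike.mem_coe, hL, isUnit_iff_exists]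
    rfl
  rw [← Nat.card_eq_fintype_card] at hcard
  obtain ⟨a, ha0, ha⟩ := hnotnearfield
  have hLcard : Nat.card LS = p ^ 2 := card_eq_prime_sq hmem hp hcard ha ha0
  have hone : p ^ 2 • (1 : R) = 0 := prime_sq_nsmul_one_eq_zero hp hcard hnotring
  exact ⟨hLcard, fun z hz => nsmul_eq_zero_of_mem hmem hp hcard hLcard hone hz,
    fun z hz w hw => congrArg Subtype.val (add_comm_of_card_eq_prime_sq hLcard ⟨z, hz⟩ ⟨w, hw⟩)⟩
end

section
/- With G_2 the metacyclic Miller–Moreno group of order p³ as additive group, the multiplication x·y = (x1·y1 − x1·x2·C(y1,2)·p)a + (x2·y1 + β(x)·y2)b, where β(x) = 1 if x1 ≢ 0 (mod p) and β(x) = 0 if x1 ≡ 0 (mod p), is associative and left-distributive, yielding a zero-symmetric nearring with identity a in which the non-invertible elements are exactly those x with p ∣ x1 and form an additive subgroup (so the nearring is local). -/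
/-- On the metacyclic Miller–Moreno group `G₂` of order `p³` written additively,
the multiplication `x·y = (x₁y₁ − x₁x₂·C(y₁,2)·p)a + (x₂y₁ + β(x)y₂)b`, where
`β(x) = 1` if `p ∤ x₁` and `β(x) = 0` otherwise, is associative and
left-distributive, yielding a zero-symmetric nearring with identity `a` in
which the non-invertible elements are exactly those `x` with `p ∣ x₁` and they
form an additive subgroup, so the nearring is local. -/
theorem G2_zero_symmetric_local_nearring (p : ℕ) (hp : p.Prime) (hodd : Odd p)
    {R : Type*} [AddGroup R] (a b : R)
    (hpa : (p ^ 2) • a = 0) (hpb : p • b = 0)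
    (hrel : -b + a + b = (1 + p) • a)
    (x1 x2 : R → ℕ)
    (hcoord : ∀ x : R, x1 x < p ^ 2 ∧ x2 x < p ∧ x = x1 x • a + x2 x • b)
    (huniq : ∀ m n m' n' : ℕ, m < p ^ 2 → n < p → m' < p ^ 2 → n' < p →
      m • a + n • b = m' • a + n' • b → m = m' ∧ n = n')
    (mul : R → R → R)
    (hmul : ∀ x y : R, mul x y =
      ((x1 x * x1 y) • a - (x1 x * x2 x * (x1 y).choose 2 * p) • a) +
        (x2 x * x1 y + (if p ∣ x1 x then 0 else 1) * x2 y) • b) :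
    (∀ x y z : R, mul (mul x y) z = mul x (mul y z)) ∧
      (∀ x y z : R, mul x (y + z) = mul x y + mul x z) ∧
      (∀ x : R, mul a x = x ∧ mul x a = x) ∧
      (∀ x : R, mul 0 x = 0 ∧ mul x 0 = 0) ∧
      (∀ x : R, (¬ ∃ v : R, mul x v = a ∧ mul v x = a) ↔ p ∣ x1 x) ∧
      ∃ S : AddSubgroup R, (S : Set R) = {x : R | p ∣ x1 x} := by
  haveI F : Fact p.Prime := ⟨hp⟩
  have hp1 : 1 < p := hp.one_lt
  haveI : NeZero (p ^ 2) := ⟨pow_ne_zero 2 hp.pos.ne'⟩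
  -- reduction of integer multiples of `a` modulo `p²` and of `b` modulo `p`
  have hza : ∀ z w : ℤ, ((z : ZMod (p ^ 2)) = (w : ZMod (p ^ 2))) → z • a = w • a := by
    intro z w h
    obtain ⟨k, hk⟩ : ((p ^ 2 : ℕ) : ℤ) ∣ z - w := by
      have h2 := (ZMod.intCast_eq_intCast_iff z w (p ^ 2)).mp h
      exact Int.ModEq.dvd h2.symm
    have hz : z = w + ((p ^ 2 : ℕ) : ℤ) * k := by linarith
    rw [hz, add_zsmul, mul_comm, mul_zsmul, natCast_zsmul, hpa, zsmul_zero, add_zero]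
  have hzb : ∀ z w : ℤ, ((z : ZMod p) = (w : ZMod p)) → z • b = w • b := by
    intro z w h
    obtain ⟨k, hk⟩ : ((p : ℕ) : ℤ) ∣ z - w := by
      have h2 := (ZMod.intCast_eq_intCast_iff z w p).mp h
      exact Int.ModEq.dvd h2.symm
    have hz : z = w + ((p : ℕ) : ℤ) * k := by linarith
    rw [hz, add_zsmul, mul_comm, mul_zsmul, natCast_zsmul, hpb, zsmul_zero, add_zero]
  have hna : ∀ s t : ℕ, ((s : ZMod (p ^ 2)) = (t : ZMod (p ^ 2))) → s • a = t • a := by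
    intro s t h
    have := hza s t (by exact_mod_cast h)
    rwa [natCast_zsmul, natCast_zsmul] at this
  -- extraction of coordinates
  have key : ∀ (y : R) (z w : ℤ), y = z • a + w • b →
      ((x1 y : ZMod (p ^ 2)) = (z : ZMod (p ^ 2)) ∧ (x2 y : ZMod p) = (w : ZMod p)) := by
    intro y z w hy
    have hz0 : (0 : ℤ) < ((p ^ 2 : ℕ) : ℤ) := by positivity
    have hw0 : (0 : ℤ) < ((p : ℕ) : ℤ) := by exact_mod_cast hp.pos
    set m : ℕ := (z % ((p ^ 2 : ℕ) : ℤ)).toNat with hm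
    set n : ℕ := (w % ((p : ℕ) : ℤ)).toNat with hn
    have hmz : (m : ℤ) = z % ((p ^ 2 : ℕ) : ℤ) :=
      Int.toNat_of_nonneg (Int.emod_nonneg z hz0.ne')
    have hnw : (n : ℤ) = w % ((p : ℕ) : ℤ) :=
      Int.toNat_of_nonneg (Int.emod_nonneg w hw0.ne')
    have hmlt : m < p ^ 2 := by
      have h2 := Int.emod_lt_of_pos z hz0
      rw [← hmz] at h2
      exact_mod_cast h2
    have hnlt : n < p := by
      have h2 := Int.emod_lt_of_pos w hw0
      rw [← hnw] at h2
      exact_mod_cast h2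
    have hmc : ((m : ℤ) : ZMod (p ^ 2)) = (z : ZMod (p ^ 2)) := by
      rw [hmz, ZMod.intCast_eq_intCast_iff]
      show z % _ % _ = z % _
      exact Int.emod_emod_of_dvd z dvd_rfl
    have hnc : ((n : ℤ) : ZMod p) = (w : ZMod p) := by
      rw [hnw, ZMod.intCast_eq_intCast_iff]
      show w % _ % _ = w % _
      exact Int.emod_emod_of_dvd w dvd_rfl
    have hza' : z • a = m • a := by
      rw [← natCast_zsmul]
      exact hza z m hmc.symm
    have hzb' : w • b = n • b := by
      rw [← natCast_zsmul]
      exact hzb w n hnc.symm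
    have heq : x1 y • a + x2 y • b = m • a + n • b := by
      rw [← (hcoord y).2.2, hy, hza', hzb']
    obtain ⟨h1, h2⟩ := huniq (x1 y) (x2 y) m n (hcoord y).1 (hcoord y).2.1 hmlt hnlt heq
    constructor
    · rw [h1, ← hmc]; push_cast; ring
    · rw [h2, ← hnc]; push_cast; ring
  -- extensionality via coordinates
  have hext : ∀ u v : R, ((x1 u : ZMod (p ^ 2)) = (x1 v : ZMod (p ^ 2))) →
      ((x2 u : ZMod p) = (x2 v : ZMod p)) → u = v := by
    intro u v h1 h2
    have e1 : x1 u = x1 v := by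
      have h3 := congrArg ZMod.val h1
      rwa [ZMod.val_cast_of_lt (hcoord u).1, ZMod.val_cast_of_lt (hcoord v).1] at h3
    have e2 : x2 u = x2 v := by
      have h3 := congrArg ZMod.val h2
      rwa [ZMod.val_cast_of_lt (hcoord u).2.1, ZMod.val_cast_of_lt (hcoord v).2.1] at h3
    rw [(hcoord u).2.2, (hcoord v).2.2, e1, e2]
  -- the map P c = c.val * p into ZMod p²
  have hXsq : ((p : ZMod (p ^ 2))) ^ 2 = 0 := by
    have h : ((p ^ 2 : ℕ) : ZMod (p ^ 2)) = 0 := ZMod.natCast_self _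
    push_cast at h
    exact h
  set P : ZMod p → ZMod (p ^ 2) := fun c => ((c.val * p : ℕ) : ZMod (p ^ 2)) with hPdef
  have hcv : ∀ c : ZMod p, ((c.val : ℕ) : ZMod p) = c := fun c => ZMod.natCast_rightInverse c
  have hPs : ∀ s : ℕ, ((s * p : ℕ) : ZMod (p ^ 2)) = P ((s : ZMod p)) := by
    intro s
    show _ = ((((s : ZMod p)).val * p : ℕ) : ZMod (p ^ 2))
    rw [ZMod.natCast_eq_natCast_iff]
    have h1 : s ≡ (s : ZMod p).val [MOD p] := by
      rw [ZMod.val_natCast]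
      exact (Nat.mod_modEq s p).symm
    have h2 := Nat.ModEq.mul_right' p h1
    rwa [← pow_two] at h2
  have hPadd : ∀ c d : ZMod p, P (c + d) = P c + P d := by
    intro c d
    have h1 := hPs (c.val + d.val)
    rw [show ((c.val + d.val : ℕ) : ZMod p) = c + d by push_cast [hcv]; ring] at h1
    rw [← h1]
    show _ = ((c.val * p : ℕ) : ZMod (p ^ 2)) + ((d.val * p : ℕ) : ZMod (p ^ 2))
    push_cast
    ring
  have hPmul : ∀ (s : ℕ) (c : ZMod p), (s : ZMod (p ^ 2)) * P c = P ((s : ZMod p) * c) := by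
    intro s c
    have h1 : (s : ZMod (p ^ 2)) * P c = ((s * c.val * p : ℕ) : ZMod (p ^ 2)) := by
      show _ * ((c.val * p : ℕ) : ZMod (p ^ 2)) = _
      push_cast
      ring
    rw [h1, hPs]
    congr 1
    push_cast [hcv]
    ring
  have hPmulr : ∀ (c : ZMod p) (s : ℕ), P c * (s : ZMod (p ^ 2)) = P (c * (s : ZMod p)) := by
    intro c s
    rw [mul_comm, hPmul, mul_comm]
  -- the projection π : ZMod p² → ZMod p
  have hpdvd : p ∣ p ^ 2 := dvd_pow_self p (by norm_num)
  set π : ZMod (p ^ 2) →+* ZMod p := ZMod.castHom hpdvd (ZMod p) with hπdef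
  have hπn : ∀ k : ℕ, π ((k : ZMod (p ^ 2))) = (k : ZMod p) := fun k => map_natCast π k
  have hπP : ∀ c : ZMod p, π (P c) = 0 := by
    intro c
    show π (((c.val * p : ℕ) : ZMod (p ^ 2))) = 0
    rw [hπn]
    push_cast
    simp [ZMod.natCast_self]
  -- coordinates of products
  have keymul : ∀ x y : R, mul x y =
      (((x1 x * x1 y : ℕ) : ℤ) - ((x1 x * x2 x * (x1 y).choose 2 * p : ℕ) : ℤ)) • a +
        ((x2 x * x1 y + (if p ∣ x1 x then 0 else 1) * x2 y : ℕ) : ℤ) • b := by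
    intro x y
    rw [hmul x y, sub_zsmul, natCast_zsmul, natCast_zsmul, natCast_zsmul, ← sub_eq_add_neg]
  have hm1 : ∀ x y : R, (x1 (mul x y) : ZMod (p ^ 2)) =
      (x1 x : ZMod (p ^ 2)) * (x1 y : ZMod (p ^ 2)) -
        P ((x1 x : ZMod p) * (x2 x : ZMod p) * (((x1 y).choose 2 : ℕ) : ZMod p)) := by
    intro x y
    have h := (key (mul x y) _ _ (keymul x y)).1
    rw [h]
    have h2 := hPs (x1 x * x2 x * (x1 y).choose 2)
    rw [show ((x1 x * x2 x * (x1 y).choose 2 : ℕ) : ZMod p) =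
        (x1 x : ZMod p) * (x2 x : ZMod p) * (((x1 y).choose 2 : ℕ) : ZMod p) by push_cast; ring] at h2
    rw [← h2]
    push_cast
    ring
  have hm2 : ∀ x y : R, (x2 (mul x y) : ZMod p) =
      (x2 x : ZMod p) * (x1 y : ZMod p) +
        (((if p ∣ x1 x then 0 else 1 : ℕ)) : ZMod p) * (x2 y : ZMod p) := by
    intro x y
    have h := (key (mul x y) _ _ (keymul x y)).2
    rw [h]
    push_cast
    ring
  have hm1p : ∀ x y : R, (x1 (mul x y) : ZMod p) = (x1 x : ZMod p) * (x1 y : ZMod p) := by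
    intro x y
    have h := congrArg π (hm1 x y)
    rwa [hπn, map_sub, map_mul, hπn, hπn, hπP, sub_zero] at h
  -- divisibility via ZMod p
  have hdvd : ∀ k : ℕ, p ∣ k ↔ (k : ZMod p) = 0 := fun k =>
    (ZMod.natCast_eq_zero_iff k p).symm
  have hBmul : ∀ x y : R, (if p ∣ x1 (mul x y) then (0 : ℕ) else 1) =
      (if p ∣ x1 x then (0 : ℕ) else 1) * (if p ∣ x1 y then (0 : ℕ) else 1) := by
    intro x y
    have hd : p ∣ x1 (mul x y) ↔ (p ∣ x1 x ∨ p ∣ x1 y) := by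
      rw [hdvd, hdvd, hdvd, hm1p x y, mul_eq_zero]
    by_cases h1 : p ∣ x1 x <;> by_cases h2 : p ∣ x1 y <;>
      simp [hd, h1, h2]
  have hβr : ∀ x : R, (((if p ∣ x1 x then 0 else 1 : ℕ)) : ZMod p) * (x1 x : ZMod p) =
      (x1 x : ZMod p) := by
    intro x
    by_cases h : p ∣ x1 x
    · simp [h, (hdvd _).mp h]
    · simp [h]
  -- conjugation and commutation rules
  have conj1 : ∀ m : ℕ, -b + m • a + b = ((1 + p) * m) • a := by
    intro m
    induction m with
    | zero => simp
    | succ k ih =>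
      have h2 : -b + (k + 1) • a + b = (-b + k • a + b) + (-b + a + b) := by
        rw [succ_nsmul]
        simp only [add_assoc, add_neg_cancel_left]
      rw [h2, ih, hrel, ← add_nsmul]
      have h3 : (1 + p) * k + (1 + p) = (1 + p) * (k + 1) := by ring
      rw [h3]
  have conj1' : ∀ m : ℕ, m • a + b = b + ((1 + p) * m) • a := by
    intro m
    calc m • a + b = b + (-b + m • a + b) := by
          simp only [add_assoc, add_neg_cancel_left]
      _ = b + ((1 + p) * m) • a := by rw [conj1]
  have comm1 : ∀ m n : ℕ, m • a + n • b = n • b + ((1 + p) ^ n * m) • a := by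
    intro m n
    induction n with
    | zero => simp
    | succ k ih =>
      calc m • a + (k + 1) • b = (m • a + k • b) + b := by rw [succ_nsmul, ← add_assoc]
        _ = k • b + (((1 + p) ^ k * m) • a + b) := by rw [ih, add_assoc]
        _ = k • b + (b + ((1 + p) * ((1 + p) ^ k * m)) • a) := by rw [conj1']
        _ = (k + 1) • b + ((1 + p) ^ (k + 1) * m) • a := by
            rw [succ_nsmul, add_assoc]
            have h3 : (1 + p) * ((1 + p) ^ k * m) = (1 + p) ^ (k + 1) * m := by ring
            rw [h3]
  have geom : ∀ k : ℕ, (1 + (p : ZMod (p ^ 2))) ^ k = 1 + (k : ZMod (p ^ 2)) * p := by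
    intro k
    induction k with
    | zero => simp
    | succ j ih =>
      have hps : (1 + (p : ZMod (p ^ 2))) ^ (j + 1) =
          (1 + (p : ZMod (p ^ 2))) ^ j * (1 + (p : ZMod (p ^ 2))) := pow_succ _ _
      rw [hps, ih]
      push_cast
      linear_combination (j : ZMod (p ^ 2)) * hXsq
  have hppow : ∀ n : ℕ, (((1 + p) ^ (n * p) : ℕ) : ZMod (p ^ 2)) = 1 := by
    intro n
    push_cast
    rw [geom]
    push_cast
    linear_combination (n : ZMod (p ^ 2)) * hXsq
  have comm1' : ∀ m n : ℕ, n • b + m • a = ((1 + p) ^ (n * (p - 1)) * m) • a + n • b := by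
    intro m n
    rw [comm1 ((1 + p) ^ (n * (p - 1)) * m) n]
    congr 1
    have e : n + n * (p - 1) = n * p := by
      obtain ⟨q, hq⟩ := Nat.exists_eq_add_of_le hp.one_le
      subst hq
      rw [Nat.add_sub_cancel_left]
      ring
    have e2 : (1 + p) ^ n * ((1 + p) ^ (n * (p - 1)) * m) = (1 + p) ^ (n * p) * m := by
      rw [← e, pow_add]
      ring
    refine (hna _ m ?_).symm
    rw [e2, Nat.cast_mul, hppow, one_mul]
  -- coordinates of sums
  have haddrep : ∀ y z : R, y + z =
      (x1 y + (1 + p) ^ (x2 y * (p - 1)) * x1 z) • a + (x2 y + x2 z) • b := by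
    intro y z
    calc y + z = (x1 y • a + x2 y • b) + (x1 z • a + x2 z • b) := by
          rw [← (hcoord y).2.2, ← (hcoord z).2.2]
      _ = x1 y • a + ((x2 y • b + x1 z • a) + x2 z • b) := by simp only [add_assoc]
      _ = x1 y • a + ((((1 + p) ^ (x2 y * (p - 1)) * x1 z) • a + x2 y • b) + x2 z • b) := by
          rw [comm1']
      _ = (x1 y • a + ((1 + p) ^ (x2 y * (p - 1)) * x1 z) • a) + (x2 y • b + x2 z • b) := by
          simp only [add_assoc]
      _ = _ := by rw [← add_nsmul, ← add_nsmul]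
  have haddE : ∀ y z : R, (((1 + p) ^ (x2 y * (p - 1)) * x1 z : ℕ) : ZMod (p ^ 2)) =
      (x1 z : ZMod (p ^ 2)) - P ((x2 y : ZMod p) * (x1 z : ZMod p)) := by
    intro y z
    have h2 := hPs (x2 y * x1 z)
    rw [show ((x2 y * x1 z : ℕ) : ZMod p) = (x2 y : ZMod p) * (x1 z : ZMod p) by push_cast; ring] at h2
    push_cast [Nat.cast_sub hp.one_le] at h2 ⊢
    rw [geom]
    push_cast [Nat.cast_sub hp.one_le]
    linear_combination ((x2 y : ZMod (p ^ 2)) * (x1 z : ZMod (p ^ 2))) * hXsq - h2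
  have hadd1 : ∀ y z : R, (x1 (y + z) : ZMod (p ^ 2)) =
      (x1 y : ZMod (p ^ 2)) + (x1 z : ZMod (p ^ 2)) - P ((x2 y : ZMod p) * (x1 z : ZMod p)) := by
    intro y z
    have h := (key (y + z) ((x1 y + (1 + p) ^ (x2 y * (p - 1)) * x1 z : ℕ) : ℤ)
      ((x2 y + x2 z : ℕ) : ℤ) (by rw [natCast_zsmul, natCast_zsmul]; exact haddrep y z)).1
    rw [h, Int.cast_natCast, Nat.cast_add, haddE y z, ← add_sub_assoc]
  have hadd2 : ∀ y z : R, (x2 (y + z) : ZMod p) = (x2 y : ZMod p) + (x2 z : ZMod p) := by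
    intro y z
    have h := (key (y + z) ((x1 y + (1 + p) ^ (x2 y * (p - 1)) * x1 z : ℕ) : ℤ)
      ((x2 y + x2 z : ℕ) : ℤ) (by rw [natCast_zsmul, natCast_zsmul]; exact haddrep y z)).2
    rw [h]
    push_cast
    ring
  have hadd1p : ∀ y z : R, (x1 (y + z) : ZMod p) = (x1 y : ZMod p) + (x1 z : ZMod p) := by
    intro y z
    have h := congrArg π (hadd1 y z)
    rwa [hπn, map_sub, map_add, hπn, hπn, hπP, sub_zero] at h
  -- binomial coefficient lemmas
  have hC2 : ∀ m : ℕ, 2 * m.choose 2 = m * (m - 1) := by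
    intro m
    rcases m with _ | k
    · simp
    · rw [Nat.choose_two_right]
      rw [Nat.mul_div_cancel']
      rcases Nat.even_mul_succ_self k with ⟨t, ht⟩
      refine ⟨t, ?_⟩
      rw [Nat.succ_sub_one, mul_comm, ht]
      ring
  have hC : ∀ m : ℕ, (2 : ZMod p) * ((m.choose 2 : ℕ) : ZMod p) =
      (m : ZMod p) * ((m : ZMod p) - 1) := by
    intro m
    rcases m with _ | k
    · simp
    · have h := hC2 (k + 1)
      have h2 : ((2 * (k + 1).choose 2 : ℕ) : ZMod p) = (((k + 1) * k : ℕ) : ZMod p) := by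
        rw [h, Nat.succ_sub_one]
      push_cast at h2
      push_cast
      linear_combination h2
  have hpne2 : p ≠ 2 := by
    rintro rfl
    simp [Nat.odd_iff] at hodd
  have htwo : (2 : ZMod p) ≠ 0 := by
    have h : ((2 : ℕ) : ZMod p) ≠ 0 := by
      rw [Ne, ← hdvd 2]
      intro h
      exact hpne2 ((Nat.prime_dvd_prime_iff_eq hp Nat.prime_two).mp h)
    exact_mod_cast h
  have chc : ∀ m m' : ℕ, ((m : ZMod p) = (m' : ZMod p)) →
      ((m.choose 2 : ℕ) : ZMod p) = ((m'.choose 2 : ℕ) : ZMod p) := by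
    intro m m' h
    apply mul_left_cancel₀ htwo
    rw [hC, hC, h]
  have chmul : ∀ s t : ℕ, (((s * t).choose 2 : ℕ) : ZMod p) =
      (t : ZMod p) * ((s.choose 2 : ℕ) : ZMod p) + (s : ZMod p) ^ 2 * ((t.choose 2 : ℕ) : ZMod p) := by
    intro s t
    apply mul_left_cancel₀ htwo
    rw [show (2 : ZMod p) * ((t : ZMod p) * ((s.choose 2 : ℕ) : ZMod p) +
        (s : ZMod p) ^ 2 * ((t.choose 2 : ℕ) : ZMod p)) =
        (t : ZMod p) * ((2 : ZMod p) * ((s.choose 2 : ℕ) : ZMod p)) +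
        (s : ZMod p) ^ 2 * ((2 : ZMod p) * ((t.choose 2 : ℕ) : ZMod p)) from by ring]
    rw [hC, hC, hC]
    push_cast
    ring
  have chadd : ∀ s t : ℕ, (((s + t).choose 2 : ℕ) : ZMod p) =
      ((s.choose 2 : ℕ) : ZMod p) + ((t.choose 2 : ℕ) : ZMod p) + (s : ZMod p) * (t : ZMod p) := by
    intro s t
    apply mul_left_cancel₀ htwo
    rw [show (2 : ZMod p) * (((s.choose 2 : ℕ) : ZMod p) + ((t.choose 2 : ℕ) : ZMod p) +
        (s : ZMod p) * (t : ZMod p)) =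
        ((2 : ZMod p) * ((s.choose 2 : ℕ) : ZMod p)) + ((2 : ZMod p) * ((t.choose 2 : ℕ) : ZMod p)) +
        2 * ((s : ZMod p) * (t : ZMod p)) from by ring]
    rw [hC, hC, hC]
    push_cast
    ring
  -- associativity
  have hass : ∀ x y z : R, mul (mul x y) z = mul x (mul y z) := by
    intro x y z
    apply hext
    · rw [hm1 (mul x y) z, hm1 x (mul y z), hm1 x y, hm1 y z, hm2 x y, hm1p x y]
      have hc : (((x1 (mul y z)).choose 2 : ℕ) : ZMod p) =
          (((x1 y * x1 z).choose 2 : ℕ) : ZMod p) := by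
        apply chc
        rw [hm1p]
        push_cast
        ring
      rw [hc, chmul]
      rw [sub_mul, hPmulr, mul_sub, hPmul]
      rw [sub_sub, sub_sub, ← hPadd, ← hPadd, mul_assoc]
      congr 2
      linear_combination ((x1 y : ZMod p) * (x2 y : ZMod p) * (((x1 z).choose 2 : ℕ) : ZMod p)) * hβr x
    · rw [hm2 (mul x y) z, hm2 x (mul y z), hm2 x y, hm1p y z, hm2 y z,
        hBmul x y, Nat.cast_mul]
      ring
  -- left distributivity
  have hld : ∀ x y z : R, mul x (y + z) = mul x y + mul x z := by
    intro x y z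
    apply hext
    · rw [hm1 x (y + z), hadd1 (mul x y) (mul x z), hm1 x y, hm1 x z, hm2 x y, hm1p x z,
        hadd1 y z]
      have hc : (((x1 (y + z)).choose 2 : ℕ) : ZMod p) =
          (((x1 y + x1 z).choose 2 : ℕ) : ZMod p) := by
        apply chc
        rw [hadd1p]
        push_cast
        ring
      rw [hc, chadd]
      rw [mul_sub, hPmul, mul_add, sub_add_sub_comm, sub_sub, sub_sub, ← hPadd, ← hPadd, ← hPadd]
      congr 2
      linear_combination (-((x2 y : ZMod p) * (x1 z : ZMod p))) * hβr x
    · rw [hm2 x (y + z), hadd2 (mul x y) (mul x z), hm2 x y, hm2 x z, hadd2 y z, hadd1p y z]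
      ring
  -- identity element
  have h1lt : 1 < p ^ 2 := by nlinarith
  have ha1 : x1 a = 1 ∧ x2 a = 0 := by
    have h := huniq 1 0 (x1 a) (x2 a) h1lt hp.pos (hcoord a).1 (hcoord a).2.1
      (by rw [one_nsmul, zero_nsmul, add_zero]; exact (hcoord a).2.2)
    exact ⟨h.1.symm, h.2.symm⟩
  have hid : ∀ x : R, mul a x = x ∧ mul x a = x := by
    intro x
    constructor
    · rw [hmul a x, ha1.1, ha1.2]
      simp [Nat.dvd_one, hp.ne_one]
      exact (hcoord x).2.2.symm
    · rw [hmul x a, ha1.1, ha1.2]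
      simp [show Nat.choose 1 2 = 0 from rfl]
      exact (hcoord x).2.2.symm
  -- zero symmetry
  have h0 : x1 (0 : R) = 0 ∧ x2 (0 : R) = 0 := by
    have h := huniq 0 0 (x1 0) (x2 0) (by positivity) hp.pos (hcoord 0).1 (hcoord 0).2.1
      (by simpa using (hcoord (0 : R)).2.2)
    exact ⟨h.1.symm, h.2.symm⟩
  have hzero : ∀ x : R, mul 0 x = 0 ∧ mul x 0 = 0 := by
    intro x
    constructor
    · rw [hmul 0 x, h0.1, h0.2]
      simp
    · rw [hmul x 0, h0.1, h0.2]
      simp [show Nat.choose 0 2 = 0 from rfl]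
  -- finiteness
  haveI : Finite R := Finite.of_surjective
    (fun q : Fin (p ^ 2) × Fin p => ((q.1 : ℕ) • a + (q.2 : ℕ) • b))
    (fun y => ⟨(⟨x1 y, (hcoord y).1⟩, ⟨x2 y, (hcoord y).2.1⟩), (hcoord y).2.2.symm⟩)
  -- injectivity of left multiplication by units
  have hinj : ∀ x : R, ¬ p ∣ x1 x → Function.Injective (mul x) := by
    intro x hx y y' h
    have hx0 : (x1 x : ZMod p) ≠ 0 := fun h0 => hx ((hdvd _).mpr h0)
    have hunit : IsUnit ((x1 x : ℕ) : ZMod (p ^ 2)) := by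
      rw [ZMod.isUnit_iff_coprime]
      exact Nat.Coprime.pow_right 2 (hp.coprime_iff_not_dvd.mpr hx).symm
    have e3 : (x1 (mul x y) : ZMod p) = (x1 (mul x y') : ZMod p) := by rw [h]
    rw [hm1p, hm1p] at e3
    have e1p : (x1 y : ZMod p) = (x1 y' : ZMod p) := mul_left_cancel₀ hx0 e3
    have hceq : (((x1 y).choose 2 : ℕ) : ZMod p) = (((x1 y').choose 2 : ℕ) : ZMod p) :=
      chc _ _ e1p
    have e1 : (x1 (mul x y) : ZMod (p ^ 2)) = (x1 (mul x y') : ZMod (p ^ 2)) := by rw [h]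
    rw [hm1 x y, hm1 x y', hceq] at e1
    have e4 : (x1 y : ZMod (p ^ 2)) = (x1 y' : ZMod (p ^ 2)) :=
      hunit.mul_left_cancel (sub_left_injective e1)
    have e2 : (x2 (mul x y) : ZMod p) = (x2 (mul x y') : ZMod p) := by rw [h]
    rw [hm2 x y, hm2 x y', if_neg hx, e1p] at e2
    have e5 : (x2 y : ZMod p) = (x2 y' : ZMod p) := by
      have := add_left_cancel e2
      simpa using this
    exact hext y y' e4 e5
  -- characterization of non-invertible elements
  have hunits : ∀ x : R, (¬ ∃ v : R, mul x v = a ∧ mul v x = a) ↔ p ∣ x1 x := by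
    intro x
    constructor
    · intro hne
      by_contra hx
      apply hne
      obtain ⟨v, hv⟩ := Finite.injective_iff_surjective.mp (hinj x hx) a
      have hv1 : ¬ p ∣ x1 v := by
        intro hd
        have e := hm1p x v
        rw [hv, ha1.1, (hdvd _).mp hd, mul_zero] at e
        simpa using e
      obtain ⟨w, hw⟩ := Finite.injective_iff_surjective.mp (hinj v hv1) a
      have hvx : mul v x = a := by
        calc mul v x = mul (mul v x) (mul v w) := by rw [hw, (hid (mul v x)).2]
          _ = mul (mul (mul v x) v) w := (hass _ _ _).symm
          _ = mul (mul v (mul x v)) w := by rw [hass v x v]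
          _ = mul (mul v a) w := by rw [hv]
          _ = mul v w := by rw [(hid v).2]
          _ = a := hw
      exact ⟨v, hv, hvx⟩
    · rintro hx ⟨v, hv, -⟩
      have e := hm1p x v
      rw [hv, ha1.1, (hdvd _).mp hx, zero_mul] at e
      simpa using e
  refine ⟨hass, hld, hid, hzero, hunits, ⟨{
    carrier := {x : R | p ∣ x1 x}
    zero_mem' := by
      show p ∣ x1 (0 : R)
      rw [h0.1]
      exact dvd_zero p
    add_mem' := by
      intro u v hu hv
      show p ∣ x1 (u + v)
      rw [hdvd, hadd1p, (hdvd _).mp hu, (hdvd _).mp hv, add_zero]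
    neg_mem' := by
      intro u hu
      show p ∣ x1 (-u)
      rw [hdvd]
      have h := hadd1p u (-u)
      rw [add_neg_cancel, h0.1, (hdvd _).mp hu] at h
      simpa using h.symm }, rfl⟩⟩
end
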